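/- Define r(c,t) = 2·sinh(√(1−c²)·t/2)/√(1−c²) if c² < 1, r(c,t) = t if c² = 1, and r(c,t) = 2·sin(√(c²−1)·t/2)/√(c²−1) if c² > 1. Let T > 0 and c, d ∈ ℝ satisfy: if c² > 1 then √(c²−1)·T/2 ∈ (0, π), and if d² > 1 then √(d²−1)·T/2 ∈ (0, π). If r(c,T) = r(d,T), then c² = d². -/

import Mathlib

/-!
Writing `x = √|1 - c²| · T / 2`, one has `r(c,T) = T · sinh x / x` when `c² < 1` and
`r(c,T) = T · sin x / x` when `c² > 1`. Since `sinh` is strictly convex on `[0, ∞)` and `sin`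
is strictly concave on `[0, π]`, and both vanish at `0`, the slope `sinh x / x` increases with
`x` while `sin x / x` decreases on `(0, π]`; moreover `sin x < x < sinh x`. Hence `r(·, T)` is a
strictly decreasing function of `c²` on the admissible range, and so it determines `c²`.
-/

open Real

/-- The invariant `r(c,t)` of the geodesics of `SL(2)`. -/
noncomputable def r (c t : ℝ) : ℝ :=
  if c ^ 2 < 1 then 2 * Real.sinh (Real.sqrt (1 - c ^ 2) * t / 2) / Real.sqrt (1 - c ^ 2)
  else if c ^ 2 = 1 then t
  else 2 * Real.sin (Real.sqrt (c ^ 2 - 1) * t / 2) / Real.sqrt (c ^ 2 - 1)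

open Set

theorem strictConvexOn_sinh_Ici : StrictConvexOn ℝ (Ici 0) sinh := by
  apply strictConvexOn_of_deriv2_pos (convex_Ici _) continuous_sinh.continuousOn fun x hx => ?_
  rw [interior_Ici] at hx
  simp [sinh_pos_iff.2 hx]

theorem sinh_div_self_strictMonoOn : StrictMonoOn (fun x => sinh x / x) (Ioi 0) :=
  fun x hx y hy hxy => by
    simpa using strictConvexOn_sinh_Ici.secant_strict_mono self_mem_Ici (Ioi_subset_Ici_self hx)
      (Ioi_subset_Ici_self hy) hx.ne' hy.ne' hxy

theorem sin_div_self_strictAntiOn : StrictAntiOn (fun x => sin x / x) (Ioc 0 π) :=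
  fun x hx y hy hxy => by
    simpa using strictConcaveOn_sin_Icc.secant_strict_mono (left_mem_Icc.2 pi_pos.le)
      (Ioc_subset_Icc_self hx) (Ioc_subset_Icc_self hy) hx.1.ne' hy.1.ne' hxy

section

variable {c d T : ℝ}

theorem r_of_sq_lt_one (hT : T ≠ 0) (hc : c ^ 2 < 1) :
    r c T = T * (sinh (√(1 - c ^ 2) * T / 2) / (√(1 - c ^ 2) * T / 2)) := by
  have : √(1 - c ^ 2) ≠ 0 := (sqrt_pos.2 (by linarith)).ne'
  rw [r, if_pos hc]
  field_simp

theorem r_of_sq_eq_one (hc : c ^ 2 = 1) : r c T = T := by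
  rw [r, if_neg hc.not_lt, if_pos hc]

theorem r_of_one_lt_sq (hT : T ≠ 0) (hc : 1 < c ^ 2) :
    r c T = T * (sin (√(c ^ 2 - 1) * T / 2) / (√(c ^ 2 - 1) * T / 2)) := by
  have : √(c ^ 2 - 1) ≠ 0 := (sqrt_pos.2 (by linarith)).ne'
  rw [r, if_neg (not_lt.2 hc.le), if_neg hc.ne']
  field_simp

theorem lt_r_of_sq_lt_one (hT : 0 < T) (hc : c ^ 2 < 1) : T < r c T := by
  have hx : 0 < √(1 - c ^ 2) * T / 2 := by have := sqrt_pos.2 (sub_pos.2 hc); positivity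
  rw [r_of_sq_lt_one hT.ne' hc]
  exact lt_mul_right hT ((one_lt_div hx).2 (self_lt_sinh_iff.2 hx))

theorem r_lt_of_one_lt_sq (hT : 0 < T) (hc : 1 < c ^ 2) : r c T < T := by
  have hx : 0 < √(c ^ 2 - 1) * T / 2 := by have := sqrt_pos.2 (sub_pos.2 hc); positivity
  rw [r_of_one_lt_sq hT.ne' hc]
  exact mul_lt_of_lt_one_right hT ((div_lt_one hx).2 (sin_lt hx))

theorem r_lt_r_of_sq_lt_one (hT : 0 < T) (hcd : c ^ 2 < d ^ 2) (hd : d ^ 2 < 1) :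
    r d T < r c T := by
  rw [r_of_sq_lt_one hT.ne' hd, r_of_sq_lt_one hT.ne' (hcd.trans hd)]
  have hlt : √(1 - d ^ 2) < √(1 - c ^ 2) := sqrt_lt_sqrt (by linarith) (by linarith)
  have hpos : 0 < √(1 - d ^ 2) := sqrt_pos.2 (by linarith)
  have hdx : 0 < √(1 - d ^ 2) * T / 2 := by positivity
  have hdc : √(1 - d ^ 2) * T / 2 < √(1 - c ^ 2) * T / 2 := by gcongr
  exact mul_lt_mul_of_pos_left (sinh_div_self_strictMonoOn hdx (hdx.trans hdc) hdc) hT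

theorem r_lt_r_of_one_lt_sq (hT : 0 < T) (hc : 1 < c ^ 2) (hcd : c ^ 2 < d ^ 2)
    (hdT : √(d ^ 2 - 1) * T / 2 ≤ π) : r d T < r c T := by
  rw [r_of_one_lt_sq hT.ne' (hc.trans hcd), r_of_one_lt_sq hT.ne' hc]
  have hlt : √(c ^ 2 - 1) < √(d ^ 2 - 1) := sqrt_lt_sqrt (by linarith) (by linarith)
  have hpos : 0 < √(c ^ 2 - 1) := sqrt_pos.2 (by linarith)
  have hcx : √(c ^ 2 - 1) * T / 2 < √(d ^ 2 - 1) * T / 2 := by gcongr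
  have hc0 : 0 < √(c ^ 2 - 1) * T / 2 := by positivity
  exact mul_lt_mul_of_pos_left
    (sin_div_self_strictAntiOn ⟨hc0, hcx.le.trans hdT⟩ ⟨hc0.trans hcx, hdT⟩ hcx) hT

theorem r_lt_r_of_sq_lt (hT : 0 < T) (hd : 1 < d ^ 2 → √(d ^ 2 - 1) * T / 2 ∈ Ioo 0 π)
    (hcd : c ^ 2 < d ^ 2) : r d T < r c T := by
  rcases lt_trichotomy (d ^ 2) 1 with hd1 | hd1 | hd1
  · exact r_lt_r_of_sq_lt_one hT hcd hd1
  · rw [r_of_sq_eq_one hd1]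
    exact lt_r_of_sq_lt_one hT (hcd.trans_eq hd1)
  · rcases lt_trichotomy (c ^ 2) 1 with hc1 | hc1 | hc1
    · exact (r_lt_of_one_lt_sq hT hd1).trans (lt_r_of_sq_lt_one hT hc1)
    · exact (r_of_sq_eq_one hc1).symm ▸ r_lt_of_one_lt_sq hT hd1
    · exact r_lt_r_of_one_lt_sq hT hc1 hcd (hd hd1).2.le

end

/-- If `r(c,T) = r(d,T)` for a common time `T > 0` (with the angle conditions when
`c² > 1` or `d² > 1`), then `c² = d²`. -/
theorem sl2_r_eq_imp_c_sq_eq (c d T : ℝ) (hT : 0 < T)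
    (hc : 1 < c ^ 2 → Real.sqrt (c ^ 2 - 1) * T / 2 ∈ Set.Ioo 0 Real.pi)
    (hd : 1 < d ^ 2 → Real.sqrt (d ^ 2 - 1) * T / 2 ∈ Set.Ioo 0 Real.pi)
    (h : r c T = r d T) :
    c ^ 2 = d ^ 2 := by
  rcases lt_trichotomy (c ^ 2) (d ^ 2) with hcd | hcd | hdc
  · exact absurd h (r_lt_r_of_sq_lt hT hd hcd).ne'
  · exact hcd
  · exact absurd h (r_lt_r_of_sq_lt hT hc hdc).ne
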